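/- There is a constant C_d > 0 such that for all n ≥ 2, all x ∈ ℝ^d and all t > 0, one has (1 - |x|²/(2nt))^{(n-2)/2} · 1_{|x|² < 2nt} ≤ C_d · e^{-|x|²/(4t)}. -/

import Mathlib

/-!
With `u = |x|²/(2nt) ∈ [0, 1)`, the elementary bound `1 - u ≤ e^{-u}` gives
`(1 - u)^{(n-2)/2} ≤ e^{-(n-2)u/2} = e^{u} · e^{-|x|²/(4t)}`, and `e^{u} ≤ e` since `u ≤ 1`,
so `C = e` works.
-/

open Real

theorem Real.one_sub_rpow_le_exp_neg_mul {u p : ℝ} (hu : u ≤ 1) (hp : 0 ≤ p) :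
    (1 - u) ^ p ≤ exp (-(p * u)) :=
  calc (1 - u) ^ p ≤ exp (-u) ^ p := rpow_le_rpow (by linarith) (one_sub_le_exp_neg u) hp
    _ = exp (-(p * u)) := by rw [← exp_mul]; ring_nf

theorem Real.one_sub_div_rpow_le_exp_one_mul {n t r : ℝ} (hn : 2 ≤ n) (ht : 0 < t)
    (hr : r ≤ 2 * n * t) :
    (1 - r / (2 * n * t)) ^ ((n - 2) / 2) ≤ exp 1 * exp (-r / (4 * t)) := by
  have hu : r / (2 * n * t) ≤ 1 := div_le_one_of_le₀ hr (by positivity)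
  have hexponent : -((n - 2) / 2 * (r / (2 * n * t))) = r / (2 * n * t) + -r / (4 * t) := by
    field_simp
    ring
  calc (1 - r / (2 * n * t)) ^ ((n - 2) / 2)
      ≤ exp (-((n - 2) / 2 * (r / (2 * n * t)))) :=
        one_sub_rpow_le_exp_neg_mul hu (by linarith)
    _ = exp (r / (2 * n * t)) * exp (-r / (4 * t)) := by rw [hexponent, exp_add]
    _ ≤ exp 1 * exp (-r / (4 * t)) := by gcongr

/-- There is `C_d > 0` such that for all `n ≥ 2`, `x ∈ ℝ^d`, `t > 0`,
`(1 - |x|²/(2nt))^((n-2)/2) · 1_{|x|² < 2nt} ≤ C_d · e^{-|x|²/(4t)}`. -/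
theorem stmt5 (d : ℕ) :
    ∃ C : ℝ, 0 < C ∧ ∀ n : ℕ, 2 ≤ n → ∀ x : EuclideanSpace ℝ (Fin d), ∀ t : ℝ, 0 < t →
      (if ‖x‖ ^ 2 < 2 * n * t then
          (1 - ‖x‖ ^ 2 / (2 * n * t)) ^ (((n : ℝ) - 2) / 2) else 0)
        ≤ C * Real.exp (-‖x‖ ^ 2 / (4 * t)) := by
  refine ⟨exp 1, exp_pos 1, fun n hn x t ht => ?_⟩
  split_ifs with hx
  · exact one_sub_div_rpow_le_exp_one_mul (by exact_mod_cast hn) ht hx.le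
  · positivity
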